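/- The ratio \(\beta(K_m)/\gamma(K_m)\) of the second moment to the third absolute moment of the Fejér kernel converges as \(m\to\infty\) to the positive constant \(\frac{4\log 2}{6\pi\log 2 - 21\zeta(3)/\pi}\). -/

import Mathlib

/-!
Write `π c_k = ∫_{-π}^{π} g(y) cos(ky) dy`. Expanding the kernel,
`∫ g K_m = (∫ g)/(2π) + ∑_{k ≤ m} (1 - k/(m+1)) c_k`, hence
`(m+1) ∫ g K_m = (m+1) ((∫ g)/(2π) + ∑_{k ≤ m} c_k) - ∑_{k ≤ m} k c_k`.
For `g = y²` and `g = |y|³` we have `g(0) = 0`, so the first bracket is minus the tail of the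
cosine series of `g` at `0`; the coefficients `4 (-1)^k / k²` and
`6π (-1)^k / k² + 12 (1 - (-1)^k) / (π k⁴)` make this tail `O(1/m²)`. Both moments are therefore
`-(∑ k c_k)/(m+1) + o(1/m)`, and `∑ k c_k` is evaluated with `∑ (-1)^k / k = -log 2` and
`∑ (1 - (-1)^k) / k³ = 7 ζ(3) / 4`.
-/

open Finset Filter

noncomputable def fejerKernel (m : ℕ) (s : ℝ) : ℝ :=
  1 / (2 * Real.pi) +
    (1 / Real.pi) * ∑ k ∈ Finset.Icc 1 m, (1 - (k : ℝ) / (m + 1)) * Real.cos (k * s)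

noncomputable def zeta3 : ℝ := ∑' n : ℕ, 1 / ((n : ℝ) + 1) ^ 3

open Real Topology intervalIntegral
open MeasureTheory (volume)

lemma sum_Icc_one_eq_sum_range_succ {M : Type*} [AddCommMonoid M] {f : ℕ → M} (hf : f 0 = 0)
    (m : ℕ) : ∑ k ∈ Icc 1 m, f k = ∑ k ∈ range (m + 1), f k := by
  rw [range_eq_Ico, sum_eq_sum_Ico_succ_bot m.succ_pos, hf, zero_add]
  rfl

lemma HasSum.tendsto_sum_Icc_one {M : Type*} [AddCommMonoid M] [TopologicalSpace M] {f : ℕ → M}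
    {a : M} (hf : HasSum f a) (hf0 : f 0 = 0) :
    Tendsto (fun m => ∑ k ∈ Icc 1 m, f k) atTop (𝓝 a) := by
  simp_rw [sum_Icc_one_eq_sum_range_succ hf0]
  exact hf.tendsto_sum_nat.comp (tendsto_add_atTop_nat 1)

lemma tendsto_mul_sub_sum_range_of_summable_mul {c : ℕ → ℝ} {S : ℝ} (hc : HasSum c S)
    (hmom : Summable fun k : ℕ => (k : ℝ) * c k) :
    Tendsto (fun m : ℕ => ((m : ℝ) + 1) * (S - ∑ k ∈ range (m + 1), c k)) atTop (𝓝 0) := by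
  set b : ℕ → ℝ := fun k => |(k : ℝ) * c k|
  have hbound : ∀ m : ℕ, ‖((m : ℝ) + 1) * (S - ∑ k ∈ range (m + 1), c k)‖
      ≤ ∑' i, b (i + (m + 1)) := by
    intro m
    have hle : ∀ i, ‖((m : ℝ) + 1) * c (i + (m + 1))‖ ≤ b (i + (m + 1)) := by
      intro i
      simp only [b, norm_mul, abs_mul, Real.norm_eq_abs]
      gcongr
      exact_mod_cast Nat.le_add_left _ _
    have hb : Summable fun i => b (i + (m + 1)) := (summable_nat_add_iff (m + 1)).mpr hmom.abs
    have hnorm := hb.of_nonneg_of_le (fun _ => norm_nonneg _) hle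
    rw [← ((hasSum_nat_add_iff' (m + 1)).mpr hc).tsum_eq, ← tsum_mul_left]
    exact (norm_tsum_le_tsum_norm hnorm).trans (hnorm.tsum_le_tsum hle hb)
  exact squeeze_zero_norm hbound ((tendsto_sum_nat_add b).comp (tendsto_add_atTop_nat 1))

lemma integral_neg_self_eq_two_mul_of_even {f : ℝ → ℝ} (hf : ∀ x, f (-x) = f x) {a : ℝ}
    (hfi : IntervalIntegrable f volume 0 a) :
    ∫ x in -a..a, f x = 2 * ∫ x in 0..a, f x := by
  have hneg : ∫ x in -a..0, f x = ∫ x in 0..a, f x := by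
    simpa [hf] using (integral_comp_neg (a := 0) (b := a) f).symm
  have hfi' : IntervalIntegrable f volume (-a) 0 := by
    simpa [hf] using (IntervalIntegrable.iff_comp_neg (f := f)).mp hfi |>.symm
  rw [← integral_add_adjacent_intervals hfi' hfi, hneg, two_mul]

lemma integral_sq_mul_cos_nat_mul {k : ℕ} (hk : k ≠ 0) :
    ∫ y in -π..π, y ^ 2 * cos (k * y) = 4 * π * (-1) ^ k / k ^ 2 := by
  have hk' : (k : ℝ) ≠ 0 := Nat.cast_ne_zero.mpr hk
  have hF : ∀ x, HasDerivAt (fun y => (k ^ 2 * y ^ 2 * sin (k * y) + 2 * k * y * cos (k * y)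
      - 2 * sin (k * y)) / k ^ 3) (x ^ 2 * cos (k * x)) x := by
    intro x
    have hl := (hasDerivAt_id' x).const_mul (k : ℝ)
    refine ((((((hasDerivAt_pow 2 x).const_mul ((k : ℝ) ^ 2)).mul hl.sin).add
      (((hasDerivAt_id' x).const_mul (2 * (k : ℝ))).mul hl.cos)).sub
      (hl.sin.const_mul 2)).div_const ((k : ℝ) ^ 3)).congr_deriv ?_
    field_simp
    ring
  rw [integral_eq_sub_of_hasDerivAt (fun x _ => hF x)
    (Continuous.intervalIntegrable (by fun_prop) _ _)]
  simp [mul_neg, sin_nat_mul_pi, cos_nat_mul_pi]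
  field_simp
  ring

lemma integral_pow_three_mul_cos_nat_mul {k : ℕ} (hk : k ≠ 0) :
    ∫ y in 0..π, y ^ 3 * cos (k * y)
      = 3 * π ^ 2 * (-1) ^ k / k ^ 2 + 6 * (1 - (-1) ^ k) / k ^ 4 := by
  have hk' : (k : ℝ) ≠ 0 := Nat.cast_ne_zero.mpr hk
  have hF : ∀ x, HasDerivAt (fun y => (k ^ 3 * y ^ 3 * sin (k * y)
      + 3 * k ^ 2 * y ^ 2 * cos (k * y) - 6 * k * y * sin (k * y) - 6 * cos (k * y)) / k ^ 4)
      (x ^ 3 * cos (k * x)) x := by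
    intro x
    have hl := (hasDerivAt_id' x).const_mul (k : ℝ)
    refine (((((((hasDerivAt_pow 3 x).const_mul ((k : ℝ) ^ 3)).mul hl.sin).add
      (((hasDerivAt_pow 2 x).const_mul (3 * (k : ℝ) ^ 2)).mul hl.cos)).sub
      (((hasDerivAt_id' x).const_mul (6 * (k : ℝ))).mul hl.sin)).sub
      (hl.cos.const_mul 6)).div_const ((k : ℝ) ^ 4)).congr_deriv ?_
    field_simp
    ring
  rw [integral_eq_sub_of_hasDerivAt (fun x _ => hF x)
    (Continuous.intervalIntegrable (by fun_prop) _ _)]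
  simp [sin_nat_mul_pi, cos_nat_mul_pi]
  field_simp
  ring

lemma integral_abs_pow_three_mul_cos_nat_mul {k : ℕ} (hk : k ≠ 0) :
    ∫ y in -π..π, |y| ^ 3 * cos (k * y)
      = 6 * π ^ 2 * (-1) ^ k / k ^ 2 + 12 * (1 - (-1) ^ k) / k ^ 4 := by
  rw [integral_neg_self_eq_two_mul_of_even (fun x => by simp [mul_neg])
      (Continuous.intervalIntegrable (by fun_prop) _ _),
    integral_congr (g := fun y => y ^ 3 * cos (k * y)) fun y hy => by
      rw [Set.uIcc_of_le pi_pos.le] at hy; simp [abs_of_nonneg hy.1],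
    integral_pow_three_mul_cos_nat_mul hk]
  ring

lemma integral_abs_pow_three : ∫ y in -π..π, |y| ^ 3 = π ^ 4 / 2 := by
  rw [integral_neg_self_eq_two_mul_of_even (fun x => by simp)
      (Continuous.intervalIntegrable (by fun_prop) _ _),
    integral_congr (g := fun y => y ^ 3) fun y hy => by
      rw [Set.uIcc_of_le pi_pos.le] at hy; simp [abs_of_nonneg hy.1],
    integral_pow]
  ring

lemma integral_mul_fejerKernel {g : ℝ → ℝ} (hg : Continuous g) (m : ℕ) :
    ∫ y in -π..π, g y * fejerKernel m y = (∫ y in -π..π, g y) / (2 * π)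
      + (1 / π) * ∑ k ∈ Icc 1 m, (1 - (k : ℝ) / (m + 1)) * ∫ y in -π..π, g y * cos (k * y) := by
  have hK : ∀ y, g y * fejerKernel m y = g y / (2 * π)
      + ∑ k ∈ Icc 1 m, (1 / π * (1 - (k : ℝ) / (m + 1))) * (g y * cos (k * y)) := by
    intro y
    rw [fejerKernel, mul_add, mul_sum, mul_sum]
    congr 1
    · ring
    · exact sum_congr rfl fun k _ => by ring
  simp_rw [hK]
  rw [integral_add ((hg.intervalIntegrable _ _).div_const _)
      (Continuous.intervalIntegrable (by fun_prop) _ _),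
    intervalIntegral.integral_finsetSum fun k _ =>
      (Continuous.intervalIntegrable (by fun_prop) _ _),
    integral_div, mul_sum]
  simp_rw [integral_const_mul, mul_assoc]

lemma tendsto_mul_integral_mul_fejerKernel {g : ℝ → ℝ} (hg : Continuous g) {c : ℕ → ℝ} {T : ℝ}
    (hc : ∀ k : ℕ, k ≠ 0 → ∫ y in -π..π, g y * cos (k * y) = π * c k)
    (htail : Tendsto (fun m : ℕ => ((m : ℝ) + 1) *
      ((∫ y in -π..π, g y) / (2 * π) + ∑ k ∈ Icc 1 m, c k)) atTop (𝓝 0))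
    (hmom : Tendsto (fun m : ℕ => ∑ k ∈ Icc 1 m, (k : ℝ) * c k) atTop (𝓝 T)) :
    Tendsto (fun m : ℕ => ((m : ℝ) + 1) * ∫ y in -π..π, g y * fejerKernel m y) atTop
      (𝓝 (-T)) := by
  have hsum : ∀ m : ℕ, (1 / π) * ∑ k ∈ Icc 1 m, (1 - (k : ℝ) / (m + 1)) *
      ∫ y in -π..π, g y * cos (k * y)
        = ∑ k ∈ Icc 1 m, c k - (∑ k ∈ Icc 1 m, (k : ℝ) * c k) / (m + 1) := by
    intro m
    rw [mul_sum, sum_div, ← sum_sub_distrib]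
    refine sum_congr rfl fun k hk => ?_
    rw [hc k (Nat.one_le_iff_ne_zero.mp (mem_Icc.mp hk).1)]
    field_simp
  have key : ∀ m : ℕ, ((m : ℝ) + 1) * ((∫ y in -π..π, g y) / (2 * π) + ∑ k ∈ Icc 1 m, c k)
      - ∑ k ∈ Icc 1 m, (k : ℝ) * c k = ((m : ℝ) + 1) * ∫ y in -π..π, g y * fejerKernel m y := by
    intro m
    rw [integral_mul_fejerKernel hg, hsum]
    field_simp
    ring
  simpa using (htail.sub hmom).congr key

-- As in `hasSum_zeta_two`, these series start at `n = 0`, whose term `x / 0 ^ p` is `0`.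
lemma hasSum_one_add_neg_one_pow_div_pow {p : ℕ} {S : ℝ}
    (h : HasSum (fun n : ℕ => 1 / (n : ℝ) ^ p) S) :
    HasSum (fun n : ℕ => (1 + (-1) ^ n) / (n : ℝ) ^ p) (2 / 2 ^ p * S) := by
  have hodd : ∀ n : ℕ, n ∉ Set.range (fun r : ℕ => 2 * r) →
      (1 + (-1 : ℝ) ^ n) / (n : ℝ) ^ p = 0 := by
    intro n hn
    have : Odd n := Nat.not_even_iff_odd.mp fun ⟨r, hr⟩ => hn ⟨r, show 2 * r = n by omega⟩
    simp [this.neg_one_pow]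
  rw [← (mul_right_injective₀ two_ne_zero).hasSum_iff hodd]
  have heven : (fun n : ℕ => (1 + (-1 : ℝ) ^ n) / (n : ℝ) ^ p) ∘ (fun r : ℕ => 2 * r)
      = fun n : ℕ => 2 / 2 ^ p * (1 / (n : ℝ) ^ p) := by
    ext n
    simp [pow_mul, mul_pow]
    ring
  rw [heven]
  exact h.mul_left _

lemma hasSum_neg_one_pow_div_pow {p : ℕ} {S : ℝ} (h : HasSum (fun n : ℕ => 1 / (n : ℝ) ^ p) S) :
    HasSum (fun n : ℕ => (-1) ^ n / (n : ℝ) ^ p) ((2 / 2 ^ p - 1) * S) := by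
  have e : (fun n : ℕ => (-1) ^ n / (n : ℝ) ^ p)
      = fun n : ℕ => (1 + (-1) ^ n) / (n : ℝ) ^ p - 1 / (n : ℝ) ^ p := by
    ext n; ring
  rw [e, sub_one_mul]
  exact (hasSum_one_add_neg_one_pow_div_pow h).sub h

lemma hasSum_one_sub_neg_one_pow_div_pow {p : ℕ} {S : ℝ}
    (h : HasSum (fun n : ℕ => 1 / (n : ℝ) ^ p) S) :
    HasSum (fun n : ℕ => (1 - (-1) ^ n) / (n : ℝ) ^ p) ((2 - 2 / 2 ^ p) * S) := by
  have e : (fun n : ℕ => (1 - (-1) ^ n) / (n : ℝ) ^ p)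
      = fun n : ℕ => 2 * (1 / (n : ℝ) ^ p) - (1 + (-1) ^ n) / (n : ℝ) ^ p := by
    ext n; ring
  rw [e, sub_mul]
  exact (h.mul_left 2).sub (hasSum_one_add_neg_one_pow_div_pow h)

lemma hasSum_zeta3 : HasSum (fun n : ℕ => 1 / (n : ℝ) ^ 3) zeta3 := by
  have hs : Summable fun n : ℕ => 1 / ((n : ℝ) + 1) ^ 3 := by
    simpa using (summable_nat_add_iff 1).mpr
      (Real.summable_one_div_nat_pow.mpr (by norm_num : 1 < 3))
  simpa using (hasSum_nat_add_iff' 1).mp (by simpa [zeta3] using hs.hasSum)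

lemma zeta3_le_pi_sq_div_six : zeta3 ≤ π ^ 2 / 6 :=
  hasSum_le (fun n => by
    rcases n.eq_zero_or_pos with rfl | hn
    · simp
    · exact one_div_le_one_div_of_le (by positivity)
        (pow_le_pow_right₀ (by exact_mod_cast hn) (by norm_num)))
    hasSum_zeta3 hasSum_zeta_two

lemma hasSum_one_sub_neg_one_pow_div_pow_three :
    HasSum (fun n : ℕ => (1 - (-1) ^ n) / (n : ℝ) ^ 3) (7 / 4 * zeta3) := by
  convert hasSum_one_sub_neg_one_pow_div_pow hasSum_zeta3 using 2
  norm_num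

lemma abs_add_sum_Icc_neg_one_pow_div_sq_le (m : ℕ) :
    |π ^ 2 / 12 + ∑ k ∈ Icc 1 m, (-1) ^ k / (k : ℝ) ^ 2| ≤ 1 / ((m : ℝ) + 1) ^ 2 := by
  set f : ℕ → ℝ := fun i => 1 / ((i : ℝ) + 1) ^ 2
  have hshift : ∀ i : ℕ, (-1) ^ (i + 1) / ((i + 1 : ℕ) : ℝ) ^ 2 = -((-1) ^ i * f i) := by
    intro i; push_cast; ring
  have hsum : HasSum (fun i => (-1) ^ i * f i) (π ^ 2 / 12) := by
    have := ((hasSum_nat_add_iff' 1).mpr (hasSum_neg_one_pow_div_pow hasSum_zeta_two)).neg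
    simp only [hshift, neg_neg] at this
    rwa [show -((2 / 2 ^ 2 - 1) * (π ^ 2 / 6) - ∑ i ∈ range 1, (-1) ^ i / (i : ℝ) ^ 2)
      = π ^ 2 / 12 by norm_num; ring] at this
  have hpart : ∑ k ∈ Icc 1 m, (-1) ^ k / (k : ℝ) ^ 2 = -∑ i ∈ range m, (-1) ^ i * f i := by
    rw [sum_Icc_one_eq_sum_range_succ (by simp), sum_range_succ', ← sum_neg_distrib]
    simp only [hshift]
    simp
  have hf : Antitone f := fun i j hij => by
    simp only [f]; gcongr
  have hf' : Summable f := by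
    simpa [f] using (summable_nat_add_iff 1).mpr (Real.summable_one_div_nat_pow.mpr one_lt_two)
  have hbound := alternating_series_error_bound f hf hf' m
  rw [hsum.tsum_eq] at hbound
  rwa [hpart, ← sub_eq_add_neg]

lemma tendsto_mul_add_sum_Icc_neg_one_pow_div_sq :
    Tendsto (fun m : ℕ => ((m : ℝ) + 1) * (π ^ 2 / 12 + ∑ k ∈ Icc 1 m, (-1) ^ k / (k : ℝ) ^ 2))
      atTop (𝓝 0) := by
  refine squeeze_zero_norm (fun m => ?_) tendsto_one_div_add_atTop_nhds_zero_nat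
  have hm : (0 : ℝ) < m + 1 := by positivity
  rw [norm_mul, Real.norm_eq_abs, Real.norm_eq_abs, abs_of_pos hm]
  calc ((m : ℝ) + 1) * |π ^ 2 / 12 + ∑ k ∈ Icc 1 m, (-1) ^ k / (k : ℝ) ^ 2|
      ≤ ((m : ℝ) + 1) * (1 / ((m : ℝ) + 1) ^ 2) := by
        gcongr; exact abs_add_sum_Icc_neg_one_pow_div_sq_le m
    _ = 1 / ((m : ℝ) + 1) := by field_simp

lemma tendsto_mul_sub_sum_Icc_one_sub_neg_one_pow_div_pow_four :
    Tendsto (fun m : ℕ => ((m : ℝ) + 1) *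
      (π ^ 4 / 48 - ∑ k ∈ Icc 1 m, (1 - (-1) ^ k) / (k : ℝ) ^ 4)) atTop (𝓝 0) := by
  have hS : HasSum (fun n : ℕ => (1 - (-1) ^ n) / (n : ℝ) ^ 4) (π ^ 4 / 48) := by
    convert hasSum_one_sub_neg_one_pow_div_pow hasSum_zeta_four using 1
    ring
  have hmom : Summable fun k : ℕ => (k : ℝ) * ((1 - (-1) ^ k) / (k : ℝ) ^ 4) := by
    refine hasSum_one_sub_neg_one_pow_div_pow_three.summable.congr fun k => ?_
    rcases eq_or_ne k 0 with rfl | hk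
    · simp
    · field_simp
  simpa [sum_Icc_one_eq_sum_range_succ] using tendsto_mul_sub_sum_range_of_summable_mul hS hmom

lemma sum_range_two_mul_alternating_harmonic (n : ℕ) :
    ∑ i ∈ range (2 * n), (-1) ^ i * (1 / ((i : ℝ) + 1)) = harmonic (2 * n) - harmonic n := by
  induction n with
  | zero => simp
  | succ n ih =>
    rw [show 2 * (n + 1) = 2 * n + 1 + 1 by ring, sum_range_succ, sum_range_succ, ih,
      harmonic_succ, harmonic_succ, harmonic_succ]
    push_cast
    simp only [pow_succ, pow_mul]
    field_simp
    ring

lemma tendsto_harmonic_two_mul_sub_harmonic :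
    Tendsto (fun n : ℕ => (harmonic (2 * n) : ℝ) - harmonic n) atTop (𝓝 (log 2)) := by
  have h2 : Tendsto (fun n : ℕ => 2 * n) atTop atTop := tendsto_id.const_mul_atTop' two_pos
  have := ((tendsto_harmonic_sub_log.comp h2).sub tendsto_harmonic_sub_log).add_const (log 2)
  rw [sub_self, zero_add] at this
  refine this.congr' ?_
  filter_upwards [eventually_ne_atTop 0] with n hn
  simp [log_mul two_ne_zero (Nat.cast_ne_zero.mpr hn)]
  ring

lemma tendsto_sum_range_alternating_harmonic :
    Tendsto (fun n => ∑ i ∈ range n, (-1) ^ i * (1 / ((i : ℝ) + 1))) atTop (𝓝 (log 2)) := by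
  obtain ⟨l, hl⟩ := Antitone.tendsto_alternating_series_of_tendsto_zero
    (fun i j hij => by gcongr) tendsto_one_div_add_atTop_nhds_zero_nat
  have heven := hl.comp (tendsto_id.const_mul_atTop' two_pos : Tendsto (2 * ·) atTop atTop)
  simp only [Function.comp_def, sum_range_two_mul_alternating_harmonic] at heven
  rwa [tendsto_nhds_unique heven tendsto_harmonic_two_mul_sub_harmonic] at hl

lemma tendsto_sum_Icc_neg_one_pow_div :
    Tendsto (fun m : ℕ => ∑ k ∈ Icc 1 m, (-1) ^ k / (k : ℝ)) atTop (𝓝 (-log 2)) := by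
  refine tendsto_sum_range_alternating_harmonic.neg.congr fun m => ?_
  rw [sum_Icc_one_eq_sum_range_succ (by simp), sum_range_succ']
  simp [pow_succ, div_eq_mul_inv]

lemma tendsto_mul_integral_sq_mul_fejerKernel :
    Tendsto (fun m : ℕ => ((m : ℝ) + 1) * ∫ y in -π..π, y ^ 2 * fejerKernel m y) atTop
      (𝓝 (4 * log 2)) := by
  have htail : Tendsto (fun m : ℕ => ((m : ℝ) + 1) *
      ((∫ y in -π..π, y ^ 2) / (2 * π) + ∑ k ∈ Icc 1 m, 4 * ((-1) ^ k / (k : ℝ) ^ 2)))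
      atTop (𝓝 0) := by
    have h := tendsto_mul_add_sum_Icc_neg_one_pow_div_sq.const_mul 4
    rw [mul_zero] at h
    refine h.congr fun m => ?_
    rw [integral_pow, ← mul_sum]
    field_simp
    ring
  have hmom : Tendsto (fun m : ℕ => ∑ k ∈ Icc 1 m, (k : ℝ) * (4 * ((-1) ^ k / (k : ℝ) ^ 2)))
      atTop (𝓝 (-(4 * log 2))) := by
    have h := tendsto_sum_Icc_neg_one_pow_div.const_mul 4
    rw [mul_neg] at h
    refine h.congr fun m => mul_sum _ _ _ |>.trans <| sum_congr rfl fun k hk => ?_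
    have : (k : ℝ) ≠ 0 := Nat.cast_ne_zero.mpr (Nat.one_le_iff_ne_zero.mp (mem_Icc.mp hk).1)
    field_simp
  simpa using tendsto_mul_integral_mul_fejerKernel (continuous_pow 2)
    (fun k hk => by rw [integral_sq_mul_cos_nat_mul hk]; ring) htail hmom

lemma tendsto_mul_integral_abs_pow_three_mul_fejerKernel :
    Tendsto (fun m : ℕ => ((m : ℝ) + 1) * ∫ y in -π..π, |y| ^ 3 * fejerKernel m y) atTop
      (𝓝 (6 * π * log 2 - 21 * zeta3 / π)) := by
  set c : ℕ → ℝ := fun k =>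
    6 * π * ((-1) ^ k / (k : ℝ) ^ 2) + 12 / π * ((1 - (-1) ^ k) / (k : ℝ) ^ 4) with hc_def
  have hc : ∀ k : ℕ, k ≠ 0 → ∫ y in -π..π, |y| ^ 3 * cos (k * y) = π * c k := fun k hk => by
    rw [integral_abs_pow_three_mul_cos_nat_mul hk, hc_def]
    field_simp
  have htail : Tendsto (fun m : ℕ => ((m : ℝ) + 1) *
      ((∫ y in -π..π, |y| ^ 3) / (2 * π) + ∑ k ∈ Icc 1 m, c k)) atTop (𝓝 0) := by
    have h := (tendsto_mul_add_sum_Icc_neg_one_pow_div_sq.const_mul (6 * π)).sub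
      (tendsto_mul_sub_sum_Icc_one_sub_neg_one_pow_div_pow_four.const_mul (12 / π))
    rw [mul_zero, mul_zero, sub_zero] at h
    refine h.congr fun m => ?_
    rw [integral_abs_pow_three, sum_add_distrib, ← mul_sum, ← mul_sum]
    field_simp
    ring
  have hmom : Tendsto (fun m : ℕ => ∑ k ∈ Icc 1 m, (k : ℝ) * c k) atTop
      (𝓝 (6 * π * -log 2 + 12 / π * (7 / 4 * zeta3))) := by
    refine ((tendsto_sum_Icc_neg_one_pow_div.const_mul (6 * π)).add
      ((hasSum_one_sub_neg_one_pow_div_pow_three.tendsto_sum_Icc_one (by simp)).const_mul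
        (12 / π))).congr fun m => ?_
    rw [mul_sum, mul_sum, ← sum_add_distrib]
    refine sum_congr rfl fun k hk => ?_
    have : (k : ℝ) ≠ 0 := Nat.cast_ne_zero.mpr (Nat.one_le_iff_ne_zero.mp (mem_Icc.mp hk).1)
    rw [hc_def]
    field_simp
  convert tendsto_mul_integral_mul_fejerKernel (by fun_prop) hc htail hmom using 2
  field_simp
  ring

lemma six_mul_pi_mul_log_two_sub_pos : 0 < 6 * π * log 2 - 21 * zeta3 / π := by
  have hπ := pi_pos
  have hζ : 21 * zeta3 / π ≤ 7 / 2 * π := by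
    rw [div_le_iff₀ hπ]
    nlinarith [zeta3_le_pi_sq_div_six]
  nlinarith [log_two_gt_d9]

theorem fejerKernel_moment_ratio :
    0 < 4 * Real.log 2 / (6 * Real.pi * Real.log 2 - 21 * zeta3 / Real.pi) ∧
    Tendsto (fun m : ℕ =>
        (∫ y in (-Real.pi)..Real.pi, y ^ 2 * fejerKernel m y) /
          (∫ y in (-Real.pi)..Real.pi, |y| ^ 3 * fejerKernel m y))
      atTop
      (nhds (4 * Real.log 2 / (6 * Real.pi * Real.log 2 - 21 * zeta3 / Real.pi))) := by
  have hden := six_mul_pi_mul_log_two_sub_pos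
  refine ⟨div_pos (by positivity) hden, ?_⟩
  refine (tendsto_mul_integral_sq_mul_fejerKernel.div
    tendsto_mul_integral_abs_pow_three_mul_fejerKernel hden.ne').congr fun m => ?_
  exact mul_div_mul_left _ _ (by positivity)
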